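/- For every c ∈ (1,2) and ε ∈ (0, min{1/4, 2−c}) there exists C > 0 such that for every j ∈ ℕ and every pair (ξ,λ) in the major box 𝔐_j = {(ξ,λ) ∈ [-1/2,1/2)² : |ξ| ≤ 2^{(2ε−1)j}, |λ| ≤ 2^{(ε−c)j}}, we have |m_j(ξ,λ) − ∫_ℝ e^{2πi(λ|t|^c − ξt)} ψ_j(t) dt| ≤ C · 2^{(2ε−1)j}, where m_j(ξ,λ) = ∑_{n≠0} e^{2πi(λ⌊|n|^c⌋ − ξn)} ψ_j(n). -/

import Mathlib

open MeasureTheory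

/-- `e x = e^{2πix}` -/
noncomputable def e (x : ℝ) : ℂ := Complex.exp (2 * Real.pi * Complex.I * x)

lemma norm_e (x : ℝ) : ‖e x‖ = 1 := by
  have : (2 * (Real.pi:ℂ) * Complex.I * (x:ℝ)) = ((2 * Real.pi * x : ℝ) : ℂ) * Complex.I := by
    push_cast; ring
  rw [e, this]
  exact Complex.norm_exp_ofReal_mul_I _

lemma hasDerivAt_e (x : ℝ) : HasDerivAt e (2 * Real.pi * Complex.I * e x) x := by
  have h1 : HasDerivAt (fun w : ℂ => Complex.exp (2 * Real.pi * Complex.I * w))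
      (Complex.exp (2 * Real.pi * Complex.I * x) * (2 * Real.pi * Complex.I * 1)) (x : ℝ) :=
    (Complex.hasDerivAt_exp _).comp _ ((hasDerivAt_id _).const_mul _)
  have h2 := h1.comp_ofReal
  rw [show Complex.exp (2 * Real.pi * Complex.I * x) * (2 * Real.pi * Complex.I * 1)
      = 2 * Real.pi * Complex.I * e x by rw [e]; ring] at h2
  exact h2

lemma e_lip (a b : ℝ) : ‖e a - e b‖ ≤ 2 * Real.pi * |a - b| := by
  have hb : ∀ x ∈ Set.univ, ‖deriv e x‖ ≤ 2 * Real.pi := by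
    intro x _
    rw [(hasDerivAt_e x).deriv]
    simp only [norm_mul, Complex.norm_ofNat, Complex.norm_real, Real.norm_eq_abs,
      Complex.norm_I, norm_e, abs_of_nonneg Real.pi_nonneg]
    ring_nf
    exact le_refl _
  have := convex_univ.norm_image_sub_le_of_norm_deriv_le
    (fun x _ => (hasDerivAt_e x).differentiableAt) hb (Set.mem_univ b) (Set.mem_univ a)
  simpa [Real.norm_eq_abs] using this


/-- The smooth dyadic piece `ψ_j(x) = (φ(2^{-j}x) - φ(2^{-j+1}x))/x` of the kernel `1/x`. -/
noncomputable def psi (φ : ℝ → ℝ) (j : ℕ) (x : ℝ) : ℝ :=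
  (φ ((2 : ℝ) ^ (-(j : ℝ)) * x) - φ ((2 : ℝ) ^ (-(j : ℝ) + 1) * x)) / x


lemma two_rpow_int (r : ℝ) (n : ℤ) (h : r = (n:ℝ)) : (2:ℝ) ^ r = (2:ℝ) ^ n := by
  rw [h, Real.rpow_intCast]

section phi
variable {φ : ℝ → ℝ}
  (hφlb : ∀ x, Set.indicator (Set.Icc (-(1/4) : ℝ) (1/4)) 1 x ≤ φ x)
  (hφub : ∀ x, φ x ≤ Set.indicator (Set.Icc (-(1/2) : ℝ) (1/2)) 1 x)

include hφlb in
lemma phi_nonneg (x : ℝ) : 0 ≤ φ x :=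
  (Set.indicator_nonneg (fun _ _ => zero_le_one) x).trans (hφlb x)

include hφub in
lemma phi_le_one (x : ℝ) : φ x ≤ 1 := by
  refine (hφub x).trans ?_
  by_cases h : x ∈ Set.Icc (-(1/2) : ℝ) (1/2)
  · rw [Set.indicator_of_mem h]; exact le_refl _
  · rw [Set.indicator_of_notMem h]; exact zero_le_one

include hφlb hφub in
lemma phi_eq_one {x : ℝ} (hx : |x| ≤ 1/4) : φ x = 1 := by
  refine le_antisymm (phi_le_one hφub x) ?_
  have hm : x ∈ Set.Icc (-(1/4) : ℝ) (1/4) := by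
    rcases abs_le.1 hx with ⟨h1, h2⟩; exact ⟨h1, h2⟩
  have := hφlb x
  rwa [Set.indicator_of_mem hm] at this

include hφlb hφub in
lemma phi_eq_zero {x : ℝ} (hx : 1/2 < |x|) : φ x = 0 := by
  refine le_antisymm ?_ (phi_nonneg hφlb x)
  have hm : x ∉ Set.Icc (-(1/2) : ℝ) (1/2) := by
    intro h
    exact absurd (abs_le.2 ⟨h.1, h.2⟩) (not_le.2 hx)
  have := hφub x
  rwa [Set.indicator_of_notMem hm] at this

include hφlb hφub in
lemma psi_small {j : ℕ} {x : ℝ} (hx : |x| ≤ (2:ℝ) ^ ((j:ℝ) - 3)) : psi φ j x = 0 := by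
  rcases eq_or_ne x 0 with rfl | hx0
  · simp [psi]
  · have h2j : (0:ℝ) < (2:ℝ) ^ (-(j:ℝ)) := Real.rpow_pos_of_pos two_pos _
    have e1 : (2:ℝ) ^ (-(j:ℝ)) * (2:ℝ) ^ ((j:ℝ) - 3) = (2:ℝ) ^ (-(3:ℝ)) := by
      rw [← Real.rpow_add two_pos, two_rpow_int _ (-3) (by push_cast; ring)]
      rw [two_rpow_int _ (-3) (by norm_num)]
    have e2 : (2:ℝ) ^ (-(j:ℝ) + 1) * (2:ℝ) ^ ((j:ℝ) - 3) = (2:ℝ) ^ (-(2:ℝ)) := by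
      rw [← Real.rpow_add two_pos, two_rpow_int _ (-2) (by push_cast; ring)]
      rw [two_rpow_int _ (-2) (by norm_num)]
    have h1 : |(2:ℝ) ^ (-(j:ℝ)) * x| ≤ 1/4 := by
      rw [abs_mul, abs_of_pos h2j]
      calc (2:ℝ) ^ (-(j:ℝ)) * |x| ≤ (2:ℝ) ^ (-(j:ℝ)) * (2:ℝ) ^ ((j:ℝ) - 3) :=
            mul_le_mul_of_nonneg_left hx h2j.le
        _ = (2:ℝ) ^ (-(3:ℝ)) := e1
        _ ≤ 1/4 := by
            rw [show (-(3:ℝ)) = ((-3 : ℤ) : ℝ) by norm_num, Real.rpow_intCast]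
            norm_num
    have h2 : |(2:ℝ) ^ (-(j:ℝ) + 1) * x| ≤ 1/4 := by
      have h2j' : (0:ℝ) < (2:ℝ) ^ (-(j:ℝ) + 1) := Real.rpow_pos_of_pos two_pos _
      rw [abs_mul, abs_of_pos h2j']
      calc (2:ℝ) ^ (-(j:ℝ) + 1) * |x| ≤ (2:ℝ) ^ (-(j:ℝ) + 1) * (2:ℝ) ^ ((j:ℝ) - 3) :=
            mul_le_mul_of_nonneg_left hx h2j'.le
        _ = (2:ℝ) ^ (-(2:ℝ)) := e2
        _ ≤ 1/4 := by
            rw [show (-(2:ℝ)) = ((-2 : ℤ) : ℝ) by norm_num, Real.rpow_intCast]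
            norm_num
    rw [psi, phi_eq_one hφlb hφub h1, phi_eq_one hφlb hφub h2, sub_self, zero_div]

include hφlb hφub in
lemma psi_large {j : ℕ} {x : ℝ} (hx : (2:ℝ) ^ ((j:ℝ) - 1) < |x|) : psi φ j x = 0 := by
  have h2j : (0:ℝ) < (2:ℝ) ^ (-(j:ℝ)) := Real.rpow_pos_of_pos two_pos _
  have h2j' : (0:ℝ) < (2:ℝ) ^ (-(j:ℝ) + 1) := Real.rpow_pos_of_pos two_pos _
  have e1 : (2:ℝ) ^ (-(j:ℝ)) * (2:ℝ) ^ ((j:ℝ) - 1) = (2:ℝ) ^ (-(1:ℝ)) := by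
    rw [← Real.rpow_add two_pos, two_rpow_int _ (-1) (by push_cast; ring)]
    rw [two_rpow_int _ (-1) (by norm_num)]
  have e2 : (2:ℝ) ^ (-(j:ℝ) + 1) * (2:ℝ) ^ ((j:ℝ) - 1) = (2:ℝ) ^ (0:ℝ) := by
    rw [← Real.rpow_add two_pos, two_rpow_int _ 0 (by push_cast; ring)]
    rw [two_rpow_int _ 0 (by norm_num)]
  have h1 : 1/2 < |(2:ℝ) ^ (-(j:ℝ)) * x| := by
    rw [abs_mul, abs_of_pos h2j]
    calc (1:ℝ)/2 = (2:ℝ) ^ (-(1:ℝ)) := by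
          rw [show (-(1:ℝ)) = ((-1 : ℤ) : ℝ) by norm_num, Real.rpow_intCast]; norm_num
      _ = (2:ℝ) ^ (-(j:ℝ)) * (2:ℝ) ^ ((j:ℝ) - 1) := e1.symm
      _ < (2:ℝ) ^ (-(j:ℝ)) * |x| := by exact mul_lt_mul_of_pos_left hx h2j
  have h2 : 1/2 < |(2:ℝ) ^ (-(j:ℝ) + 1) * x| := by
    rw [abs_mul, abs_of_pos h2j']
    calc (1:ℝ)/2 < (2:ℝ) ^ (0:ℝ) := by norm_num
      _ = (2:ℝ) ^ (-(j:ℝ) + 1) * (2:ℝ) ^ ((j:ℝ) - 1) := e2.symm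
      _ ≤ (2:ℝ) ^ (-(j:ℝ) + 1) * |x| := mul_le_mul_of_nonneg_left hx.le h2j'.le
  rw [psi, phi_eq_zero hφlb hφub h1, phi_eq_zero hφlb hφub h2, sub_self, zero_div]

include hφlb hφub in
lemma psi_abs_le {j : ℕ} (x : ℝ) : |psi φ j x| ≤ 8 * (2:ℝ) ^ (-(j:ℝ)) := by
  have hB : (0:ℝ) < (2:ℝ) ^ (-(j:ℝ)) := Real.rpow_pos_of_pos two_pos _
  by_cases h : |x| ≤ (2:ℝ) ^ ((j:ℝ) - 3)
  · rw [psi_small hφlb hφub h, abs_zero]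
    positivity
  · push_neg at h
    have hx0 : x ≠ 0 := by
      intro h0
      rw [h0, abs_zero] at h
      exact absurd (Real.rpow_pos_of_pos two_pos _) (not_lt.2 h.le)
    have hnum : |φ ((2:ℝ) ^ (-(j:ℝ)) * x) - φ ((2:ℝ) ^ (-(j:ℝ) + 1) * x)| ≤ 1 := by
      rw [abs_sub_le_iff]
      constructor <;>
        [have := phi_le_one hφub ((2:ℝ) ^ (-(j:ℝ)) * x);
         have := phi_le_one hφub ((2:ℝ) ^ (-(j:ℝ) + 1) * x)] <;>
        [have h2 := phi_nonneg hφlb ((2:ℝ) ^ (-(j:ℝ) + 1) * x);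
         have h2 := phi_nonneg hφlb ((2:ℝ) ^ (-(j:ℝ)) * x)] <;> linarith
    rw [psi, abs_div]
    have hxpos : (0:ℝ) < |x| := (Real.rpow_pos_of_pos two_pos _).trans h
    rw [div_le_iff₀ hxpos]
    calc |φ ((2:ℝ) ^ (-(j:ℝ)) * x) - φ ((2:ℝ) ^ (-(j:ℝ) + 1) * x)| ≤ 1 := hnum
      _ ≤ (8 * (2:ℝ) ^ (-(j:ℝ))) * (2:ℝ) ^ ((j:ℝ) - 3) := by
          rw [mul_assoc, ← Real.rpow_add two_pos,
            two_rpow_int _ (-3) (by push_cast; ring)]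
          norm_num
      _ ≤ (8 * (2:ℝ) ^ (-(j:ℝ))) * |x| := by
          apply mul_le_mul_of_nonneg_left h.le
          positivity
end phi



lemma phi_diff_le {φ : ℝ → ℝ}
    (hφlb : ∀ x, Set.indicator (Set.Icc (-(1/4) : ℝ) (1/4)) 1 x ≤ φ x)
    (hφub : ∀ x, φ x ≤ Set.indicator (Set.Icc (-(1/2) : ℝ) (1/2)) 1 x)
    (a b : ℝ) : |φ a - φ b| ≤ 1 := by
  have hub : ∀ x : ℝ, φ x ≤ 1 := by
    intro x
    refine (hφub x).trans ?_
    by_cases h : x ∈ Set.Icc (-(1/2) : ℝ) (1/2)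
    · rw [Set.indicator_of_mem h]; exact le_refl _
    · rw [Set.indicator_of_notMem h]; exact zero_le_one
  have hlb : ∀ x : ℝ, 0 ≤ φ x := fun x =>
    (Set.indicator_nonneg (fun _ _ => zero_le_one) x).trans (hφlb x)
  rw [abs_sub_le_iff]
  constructor <;> [have := hub a; have := hub b] <;> [have h2 := hlb b; have h2 := hlb a] <;>
    linarith

lemma abs_rpow_hasDerivAt {c : ℝ} (hc : 1 < c) {t : ℝ} (ht : t ≠ 0) :
    ∃ d, HasDerivAt (fun s : ℝ => |s| ^ c) d t ∧ |d| ≤ c * |t| ^ (c - 1) := by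
  have hc0 : (0:ℝ) ≤ c := by linarith
  rcases ht.lt_or_gt with htn | htp
  · refine ⟨c * (-t) ^ (c - 1) * (-1), ?_, ?_⟩
    · have hinner : HasDerivAt (fun s : ℝ => -s) (-1) t := (hasDerivAt_id t).neg
      have h := (Real.hasDerivAt_rpow_const (p := c)
        (Or.inl (neg_ne_zero.2 ht))).comp t hinner
      refine h.congr_of_eventuallyEq ?_
      filter_upwards [Iio_mem_nhds htn] with s hs
      simp [abs_of_neg (Set.mem_Iio.1 hs), Function.comp]
    · rw [abs_of_neg htn]
      rw [abs_mul, abs_mul]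
      have h1 : |c| = c := abs_of_nonneg hc0
      have h2 : |(-t) ^ (c-1)| = (-t) ^ (c-1) :=
        abs_of_nonneg (Real.rpow_nonneg (by linarith) _)
      rw [h1, h2]
      simp
  · refine ⟨c * t ^ (c - 1), ?_, ?_⟩
    · have h := Real.hasDerivAt_rpow_const (p := c) (Or.inl ht)
      refine h.congr_of_eventuallyEq ?_
      filter_upwards [Ioi_mem_nhds htp] with s hs
      simp [abs_of_pos (Set.mem_Ioi.1 hs)]
    · rw [abs_of_pos htp, abs_mul]
      have h1 : |c| = c := abs_of_nonneg hc0
      have h2 : |t ^ (c-1)| = t ^ (c-1) :=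
        abs_of_nonneg (Real.rpow_nonneg htp.le _)
      rw [h1, h2]

lemma psi_hasDerivAt {φ : ℝ → ℝ} (hφsmooth : ContDiff ℝ (⊤ : ℕ∞) φ) {j : ℕ} {x : ℝ} (hx : x ≠ 0) :
    HasDerivAt (psi φ j)
      ((((2:ℝ) ^ (-(j:ℝ)) * deriv φ ((2:ℝ) ^ (-(j:ℝ)) * x)
        - (2:ℝ) ^ (-(j:ℝ) + 1) * deriv φ ((2:ℝ) ^ (-(j:ℝ) + 1) * x)) * x
        - (φ ((2:ℝ) ^ (-(j:ℝ)) * x) - φ ((2:ℝ) ^ (-(j:ℝ) + 1) * x))) / x ^ 2) x := by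
  have hφd : Differentiable ℝ φ := hφsmooth.differentiable (by simp)
  have hd1 : HasDerivAt (fun y : ℝ => φ ((2:ℝ) ^ (-(j:ℝ)) * y))
      (deriv φ ((2:ℝ) ^ (-(j:ℝ)) * x) * (2:ℝ) ^ (-(j:ℝ))) x := by
    have := (hφd _).hasDerivAt.comp x ((hasDerivAt_id x).const_mul ((2:ℝ) ^ (-(j:ℝ))))
    simpa [Function.comp_def] using this
  have hd2 : HasDerivAt (fun y : ℝ => φ ((2:ℝ) ^ (-(j:ℝ) + 1) * y))
      (deriv φ ((2:ℝ) ^ (-(j:ℝ) + 1) * x) * (2:ℝ) ^ (-(j:ℝ) + 1)) x := by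
    have := (hφd _).hasDerivAt.comp x ((hasDerivAt_id x).const_mul ((2:ℝ) ^ (-(j:ℝ) + 1)))
    simpa [Function.comp_def] using this
  have hnum := hd1.sub hd2
  have hden : HasDerivAt (fun y : ℝ => y) 1 x := hasDerivAt_id x
  have h := hnum.div hden hx
  have hpsi : psi φ j = fun y : ℝ =>
      (φ ((2:ℝ) ^ (-(j:ℝ)) * y) - φ ((2:ℝ) ^ (-(j:ℝ) + 1) * y)) / y := rfl
  rw [hpsi]
  refine h.congr_deriv ?_
  simp only [Pi.sub_apply, mul_one]
  ring

lemma psi_deriv_bound {φ : ℝ → ℝ} (hφsmooth : ContDiff ℝ (⊤ : ℕ∞) φ)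
    (hφlb : ∀ x, Set.indicator (Set.Icc (-(1/4) : ℝ) (1/4)) 1 x ≤ φ x)
    (hφub : ∀ x, φ x ≤ Set.indicator (Set.Icc (-(1/2) : ℝ) (1/2)) 1 x)
    {K : ℝ} (hK : ∀ x, |deriv φ x| ≤ K) {j : ℕ} {x : ℝ}
    (hx : (2:ℝ) ^ ((j:ℝ) - 3) ≤ |x|) :
    ∃ d, HasDerivAt (psi φ j) d x ∧ |d| ≤ (24 * K + 64) * ((2:ℝ) ^ (-(j:ℝ)))^2 := by
  have hB : (0:ℝ) < (2:ℝ) ^ (-(j:ℝ)) := Real.rpow_pos_of_pos two_pos _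
  have hK0 : 0 ≤ K := (abs_nonneg _).trans (hK 0)
  have hxpos : 0 < |x| := lt_of_lt_of_le (Real.rpow_pos_of_pos two_pos _) hx
  have hx0 : x ≠ 0 := fun h => by simp [h] at hxpos
  have hb2 : (2:ℝ) ^ (-(j:ℝ) + 1) = 2 * (2:ℝ) ^ (-(j:ℝ)) := by
    rw [Real.rpow_add two_pos, Real.rpow_one]; ring
  have h8 : 1 ≤ 8 * (2:ℝ) ^ (-(j:ℝ)) * |x| := by
    have he : 8 * (2:ℝ) ^ (-(j:ℝ)) * (2:ℝ) ^ ((j:ℝ) - 3) = 1 := by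
      rw [mul_assoc, ← Real.rpow_add two_pos]
      rw [show -(j:ℝ) + ((j:ℝ) - 3) = ((-3 : ℤ) : ℝ) by push_cast; ring, Real.rpow_intCast]
      norm_num
    calc (1:ℝ) = 8 * (2:ℝ) ^ (-(j:ℝ)) * (2:ℝ) ^ ((j:ℝ) - 3) := he.symm
      _ ≤ 8 * (2:ℝ) ^ (-(j:ℝ)) * |x| := by
          apply mul_le_mul_of_nonneg_left hx; positivity
  refine ⟨_, psi_hasDerivAt hφsmooth hx0, ?_⟩
  have hnum' : |(2:ℝ) ^ (-(j:ℝ)) * deriv φ ((2:ℝ) ^ (-(j:ℝ)) * x)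
      - (2:ℝ) ^ (-(j:ℝ) + 1) * deriv φ ((2:ℝ) ^ (-(j:ℝ) + 1) * x)|
      ≤ 3 * (2:ℝ) ^ (-(j:ℝ)) * K := by
    refine (abs_sub _ _).trans ?_
    rw [abs_mul, abs_mul]
    have h1 := hK ((2:ℝ) ^ (-(j:ℝ)) * x)
    have h2 := hK ((2:ℝ) ^ (-(j:ℝ) + 1) * x)
    have habs1 : |(2:ℝ) ^ (-(j:ℝ))| = (2:ℝ) ^ (-(j:ℝ)) := abs_of_pos hB
    have habs2 : |(2:ℝ) ^ (-(j:ℝ) + 1)| = 2 * (2:ℝ) ^ (-(j:ℝ)) := by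
      rw [abs_of_pos (Real.rpow_pos_of_pos two_pos _), hb2]
    rw [habs1, habs2]
    nlinarith [abs_nonneg (deriv φ ((2:ℝ) ^ (-(j:ℝ)) * x)),
      abs_nonneg (deriv φ ((2:ℝ) ^ (-(j:ℝ) + 1) * x))]
  have hnum : |φ ((2:ℝ) ^ (-(j:ℝ)) * x) - φ ((2:ℝ) ^ (-(j:ℝ) + 1) * x)| ≤ 1 :=
    phi_diff_le hφlb hφub _ _
  rw [abs_div, abs_of_nonneg (sq_nonneg x)]
  rw [div_le_iff₀ (by positivity : (0:ℝ) < x ^ 2)]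
  have habs : |((2:ℝ) ^ (-(j:ℝ)) * deriv φ ((2:ℝ) ^ (-(j:ℝ)) * x)
        - (2:ℝ) ^ (-(j:ℝ) + 1) * deriv φ ((2:ℝ) ^ (-(j:ℝ) + 1) * x)) * x
        - (φ ((2:ℝ) ^ (-(j:ℝ)) * x) - φ ((2:ℝ) ^ (-(j:ℝ) + 1) * x))|
      ≤ 3 * (2:ℝ) ^ (-(j:ℝ)) * K * |x| + 1 := by
    refine (abs_sub _ _).trans ?_
    rw [abs_mul]
    have := mul_le_mul_of_nonneg_right hnum' (abs_nonneg x)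
    linarith
  refine habs.trans ?_
  have hsq : x ^ 2 = |x| ^ 2 := (sq_abs x).symm
  rw [hsq]
  nlinarith [mul_le_mul_of_nonneg_left h8
      (mul_nonneg (mul_nonneg (by norm_num : (0:ℝ) ≤ 3) hB.le) (mul_nonneg hK0 hxpos.le)),
    sq_nonneg (8 * (2:ℝ) ^ (-(j:ℝ)) * |x|), mul_pos hB hB]


lemma F_deriv {φ : ℝ → ℝ} (hφsmooth : ContDiff ℝ (⊤ : ℕ∞) φ)
    (hφlb : ∀ x, Set.indicator (Set.Icc (-(1/4) : ℝ) (1/4)) 1 x ≤ φ x)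
    (hφub : ∀ x, φ x ≤ Set.indicator (Set.Icc (-(1/2) : ℝ) (1/2)) 1 x)
    {K : ℝ} (hK : ∀ x, |deriv φ x| ≤ K)
    {c ε : ℝ} (hc1 : 1 < c) (hε1 : 0 < ε) {j : ℕ} {ξ lam : ℝ}
    (hξ : |ξ| ≤ (2 : ℝ) ^ ((2 * ε - 1) * (j : ℝ)))
    (hlam : |lam| ≤ (2 : ℝ) ^ ((ε - c) * (j : ℝ))) (t : ℝ) :
    ∃ D, HasDerivAt (fun s : ℝ => e (lam * |s| ^ c - ξ * s) * (psi φ j s : ℂ)) D t ∧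
      ‖D‖ ≤ (16 * Real.pi * (c + 1) + 24 * K + 64) * (2:ℝ) ^ ((2 * ε - 2) * (j : ℝ)) := by
  have hK0 : 0 ≤ K := (abs_nonneg _).trans (hK 0)
  have hπ : (0:ℝ) ≤ Real.pi := Real.pi_nonneg
  have hM0 : 0 ≤ (16 * Real.pi * (c + 1) + 24 * K + 64) * (2:ℝ) ^ ((2 * ε - 2) * (j : ℝ)) := by
    apply mul_nonneg
    · nlinarith
    · positivity
  by_cases h0 : |t| < (2:ℝ) ^ ((j:ℝ) - 3)
  · refine ⟨0, ?_, by simpa using hM0⟩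
    have hopen : IsOpen {s : ℝ | |s| < (2:ℝ) ^ ((j:ℝ) - 3)} :=
      isOpen_lt continuous_abs continuous_const
    have hev : (fun s : ℝ => e (lam * |s| ^ c - ξ * s) * (psi φ j s : ℂ))
        =ᶠ[nhds t] fun _ => 0 := by
      filter_upwards [hopen.mem_nhds h0] with s hs
      rw [psi_small hφlb hφub (le_of_lt hs)]
      simp
    exact (hasDerivAt_const t (0:ℂ)).congr_of_eventuallyEq hev
  · push_neg at h0
    have ht0 : t ≠ 0 := by
      intro h
      rw [h, abs_zero] at h0
      exact absurd (Real.rpow_pos_of_pos two_pos ((j:ℝ) - 3)) (not_lt.2 h0)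
    obtain ⟨dabs, hdabs, hdabs_le⟩ := abs_rpow_hasDerivAt hc1 ht0
    obtain ⟨dψ, hdψ, hdψ_le⟩ := psi_deriv_bound hφsmooth hφlb hφub hK h0
    have hg : HasDerivAt (fun s : ℝ => lam * |s| ^ c - ξ * s) (lam * dabs - ξ * 1) t :=
      (hdabs.const_mul lam).sub ((hasDerivAt_id t).const_mul ξ)
    have hE : HasDerivAt (fun s : ℝ => e (lam * |s| ^ c - ξ * s))
        ((lam * dabs - ξ * 1) • (2 * Real.pi * Complex.I * e (lam * |t| ^ c - ξ * t))) t :=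
      (hasDerivAt_e _).scomp t hg
    have hψC : HasDerivAt (fun s : ℝ => ((psi φ j s : ℝ) : ℂ)) ((dψ : ℝ) : ℂ) t :=
      hdψ.ofReal_comp
    have hF := hE.mul hψC
    refine ⟨_, hF, ?_⟩
    have hB : (0:ℝ) < (2:ℝ) ^ (-(j:ℝ)) := Real.rpow_pos_of_pos two_pos _
    have hnorm2 : ‖e (lam * |t| ^ c - ξ * t) * ((dψ : ℝ) : ℂ)‖
        ≤ (24 * K + 64) * ((2:ℝ) ^ (-(j:ℝ)))^2 := by
      rw [norm_mul, norm_e, one_mul, Complex.norm_real, Real.norm_eq_abs]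
      exact hdψ_le
    have hnorm1 : ‖((lam * dabs - ξ * 1) •
          (2 * Real.pi * Complex.I * e (lam * |t| ^ c - ξ * t))) * ((psi φ j t : ℝ) : ℂ)‖
        ≤ 16 * Real.pi * (c + 1) * (2:ℝ) ^ ((2 * ε - 2) * (j:ℝ)) := by
      rw [norm_mul, norm_smul, Real.norm_eq_abs, Complex.norm_real, Real.norm_eq_abs]
      have hen : ‖2 * Real.pi * Complex.I * e (lam * |t| ^ c - ξ * t)‖ = 2 * Real.pi := by
        simp only [norm_mul, Complex.norm_ofNat, Complex.norm_real, Real.norm_eq_abs,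
          Complex.norm_I, norm_e, abs_of_nonneg hπ]
        ring
      rw [hen]
      by_cases hlarge : (2:ℝ) ^ ((j:ℝ) - 1) < |t|
      · rw [psi_large hφlb hφub hlarge, abs_zero, mul_zero]
        positivity
      · push_neg at hlarge
        have hgd : |lam * dabs - ξ * 1| ≤ (c + 1) * (2:ℝ) ^ ((2 * ε - 1) * (j:ℝ)) := by
          have h1 : |lam * dabs| ≤ c * (2:ℝ) ^ ((2 * ε - 1) * (j:ℝ)) := by
            rw [abs_mul]
            have htpow : |t| ^ (c - 1) ≤ (2:ℝ) ^ (((j:ℝ) - 1) * (c - 1)) := by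
              rw [Real.rpow_mul two_pos.le]
              exact Real.rpow_le_rpow (abs_nonneg t) hlarge (by linarith)
            have step : |lam| * |dabs| ≤
                (2:ℝ) ^ ((ε - c) * (j:ℝ)) * (c * (2:ℝ) ^ (((j:ℝ) - 1) * (c - 1))) := by
              apply mul_le_mul hlam (hdabs_le.trans ?_) (abs_nonneg _)
                (Real.rpow_nonneg two_pos.le _)
              exact mul_le_mul_of_nonneg_left htpow (by linarith)
            refine step.trans ?_
            rw [show (2:ℝ) ^ ((ε - c) * (j:ℝ)) * (c * (2:ℝ) ^ (((j:ℝ) - 1) * (c - 1)))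
              = c * ((2:ℝ) ^ ((ε - c) * (j:ℝ)) * (2:ℝ) ^ (((j:ℝ) - 1) * (c - 1))) by ring]
            rw [← Real.rpow_add two_pos]
            apply mul_le_mul_of_nonneg_left ?_ (by linarith : (0:ℝ) ≤ c)
            apply Real.rpow_le_rpow_of_exponent_le one_le_two
            have hj0 : (0:ℝ) ≤ (j:ℝ) := Nat.cast_nonneg j
            nlinarith
          have h2 : |ξ * 1| ≤ (2:ℝ) ^ ((2 * ε - 1) * (j:ℝ)) := by
            rw [mul_one]; exact hξ
          calc |lam * dabs - ξ * 1| ≤ |lam * dabs| + |ξ * 1| := abs_sub _ _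
            _ ≤ c * (2:ℝ) ^ ((2 * ε - 1) * (j:ℝ)) + (2:ℝ) ^ ((2 * ε - 1) * (j:ℝ)) := by
                linarith
            _ = (c + 1) * (2:ℝ) ^ ((2 * ε - 1) * (j:ℝ)) := by ring
        have hψb : |psi φ j t| ≤ 8 * (2:ℝ) ^ (-(j:ℝ)) := psi_abs_le hφlb hφub t
        calc |lam * dabs - ξ * 1| * (2 * Real.pi) * |psi φ j t|
            ≤ ((c + 1) * (2:ℝ) ^ ((2 * ε - 1) * (j:ℝ))) * (2 * Real.pi)
              * (8 * (2:ℝ) ^ (-(j:ℝ))) := by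
              apply mul_le_mul ?_ hψb (abs_nonneg _) (by positivity)
              apply mul_le_mul_of_nonneg_right hgd (by positivity)
          _ = 16 * Real.pi * (c + 1) *
              ((2:ℝ) ^ ((2 * ε - 1) * (j:ℝ)) * (2:ℝ) ^ (-(j:ℝ))) := by ring
          _ = 16 * Real.pi * (c + 1) * (2:ℝ) ^ ((2 * ε - 2) * (j:ℝ)) := by
              rw [← Real.rpow_add two_pos]
              ring_nf
    have hBsq : ((2:ℝ) ^ (-(j:ℝ)))^2 ≤ (2:ℝ) ^ ((2 * ε - 2) * (j:ℝ)) := by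
      rw [sq, ← Real.rpow_add two_pos]
      apply Real.rpow_le_rpow_of_exponent_le one_le_two
      have hj0 : (0:ℝ) ≤ (j:ℝ) := Nat.cast_nonneg j
      nlinarith
    calc ‖_ * ((psi φ j t : ℝ) : ℂ) + e (lam * |t| ^ c - ξ * t) * ((dψ : ℝ) : ℂ)‖
        ≤ ‖_ * ((psi φ j t : ℝ) : ℂ)‖ + ‖e (lam * |t| ^ c - ξ * t) * ((dψ : ℝ) : ℂ)‖ :=
          norm_add_le _ _
      _ ≤ 16 * Real.pi * (c + 1) * (2:ℝ) ^ ((2 * ε - 2) * (j:ℝ))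
          + (24 * K + 64) * ((2:ℝ) ^ (-(j:ℝ)))^2 := add_le_add hnorm1 hnorm2
      _ ≤ (16 * Real.pi * (c + 1) + 24 * K + 64) * (2:ℝ) ^ ((2 * ε - 2) * (j : ℝ)) := by
          have := mul_le_mul_of_nonneg_left hBsq (by linarith : (0:ℝ) ≤ 24 * K + 64)
          nlinarith [Real.rpow_pos_of_pos two_pos ((2 * ε - 2) * (j:ℝ))]

/-- The multiplier `m_j(ξ,λ) = ∑_{n ≠ 0} e(λ⌊|n|^c⌋ - ξn) ψ_j(n)`. -/
noncomputable def mj (φ : ℝ → ℝ) (c : ℝ) (j : ℕ) (ξ lam : ℝ) : ℂ :=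
  ∑' n : ℤ, if n = 0 then 0 else
    e (lam * (⌊|(n : ℝ)| ^ c⌋ : ℝ) - ξ * (n : ℝ)) * (psi φ j (n : ℝ) : ℂ)

set_option maxHeartbeats 1000000 in
theorem stmt2 (c ε : ℝ) (hc1 : 1 < c) (hc2 : c < 2)
    (hε1 : 0 < ε) (hε2 : ε < min (1/4) (2 - c))
    (φ : ℝ → ℝ) (hφsmooth : ContDiff ℝ (⊤ : ℕ∞) φ) (hφeven : ∀ x, φ (-x) = φ x)
    (hφlb : ∀ x, Set.indicator (Set.Icc (-(1/4) : ℝ) (1/4)) 1 x ≤ φ x)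
    (hφub : ∀ x, φ x ≤ Set.indicator (Set.Icc (-(1/2) : ℝ) (1/2)) 1 x) :
    ∃ C > (0 : ℝ), ∀ (j : ℕ) (ξ lam : ℝ),
      ξ ∈ Set.Ico (-(1/2) : ℝ) (1/2) → lam ∈ Set.Ico (-(1/2) : ℝ) (1/2) →
      |ξ| ≤ (2 : ℝ) ^ ((2 * ε - 1) * (j : ℝ)) →
      |lam| ≤ (2 : ℝ) ^ ((ε - c) * (j : ℝ)) →
      ‖mj φ c j ξ lam -
          ∫ t : ℝ, e (lam * |t| ^ c - ξ * t) * (psi φ j t : ℂ)‖ ≤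
        C * (2 : ℝ) ^ ((2 * ε - 1) * (j : ℝ)) := by
  have hπ : (0:ℝ) < Real.pi := Real.pi_pos
  -- a bound for the derivative of φ
  have hφ0 : ∀ x, x ∉ Set.Icc (-(1/2):ℝ) (1/2) → φ x = 0 := by
    intro x hx
    refine phi_eq_zero hφlb hφub ?_
    by_contra h
    push_neg at h
    exact hx (abs_le.1 h)
  have hφcs : HasCompactSupport φ := HasCompactSupport.intro isCompact_Icc hφ0
  have hφdcont : Continuous (deriv φ) := hφsmooth.continuous_deriv (by simp)
  obtain ⟨K, hKn⟩ := hφcs.deriv.exists_bound_of_continuous hφdcont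
  have hK : ∀ x, |deriv φ x| ≤ K := fun x => by
    simpa [Real.norm_eq_abs] using hKn x
  have hK0 : 0 ≤ K := (abs_nonneg _).trans (hK 0)
  refine ⟨32 * Real.pi + 2 * (16 * Real.pi * (c + 1) + 24 * K + 64) + 1,
    by nlinarith, ?_⟩
  intro j ξ lam hξI hlamI hξ hlam
  set M : ℝ := (16 * Real.pi * (c + 1) + 24 * K + 64) * (2:ℝ) ^ ((2 * ε - 2) * (j : ℝ))
    with hMdef
  have hM0 : 0 ≤ M := by
    rw [hMdef]
    apply mul_nonneg
    · nlinarith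
    · positivity
  set F : ℝ → ℂ := fun t => e (lam * |t| ^ c - ξ * t) * (psi φ j t : ℂ) with hFdef
  set G : ℤ → ℂ := fun n => if n = 0 then 0 else
    e (lam * (⌊|(n : ℝ)| ^ c⌋ : ℝ) - ξ * (n : ℝ)) * (psi φ j (n : ℝ) : ℂ) with hGdef
  set N : ℕ := 2 ^ j with hNdef
  have hN1 : 1 ≤ N := Nat.one_le_two_pow
  have hNr : (N:ℝ) = (2:ℝ) ^ ((j:ℝ)) := by
    rw [hNdef]
    push_cast
    exact (Real.rpow_natCast 2 j).symm
  have hhalf : (2:ℝ) ^ ((j:ℝ) - 1) < (N:ℝ) := by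
    rw [hNr]
    exact Real.rpow_lt_rpow_of_exponent_lt one_lt_two (by linarith)
  have hFlarge : ∀ t : ℝ, (2:ℝ) ^ ((j:ℝ) - 1) < |t| → F t = 0 := by
    intro t ht
    rw [hFdef]
    simp only
    rw [psi_large hφlb hφub ht]
    simp
  -- differentiability and Lipschitz bound of F
  have hFd := fun t => F_deriv hφsmooth hφlb hφub hK hc1 hε1 hξ hlam t
  have hDiff : Differentiable ℝ F := fun t => (hFd t).choose_spec.1.differentiableAt
  have hderiv_bound : ∀ t, ‖deriv F t‖ ≤ M := by
    intro t
    obtain ⟨D, hD, hDle⟩ := hFd t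
    rw [hD.deriv]
    exact hDle
  have hLip : ∀ s t : ℝ, ‖F s - F t‖ ≤ M * |s - t| := by
    intro s t
    have := convex_univ.norm_image_sub_le_of_norm_deriv_le
      (fun x _ => hDiff x) (fun x _ => hderiv_bound x) (Set.mem_univ t) (Set.mem_univ s)
    simpa [Real.norm_eq_abs] using this
  have hcs : HasCompactSupport F := by
    apply HasCompactSupport.intro (isCompact_Icc (a := -(N:ℝ)) (b := (N:ℝ)))
    intro x hx
    apply hFlarge
    refine lt_of_lt_of_le hhalf ?_
    rw [Set.mem_Icc] at hx
    rcases not_and_or.1 hx with h | h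
    · push_neg at h
      calc (N:ℝ) ≤ -x := by linarith
        _ ≤ |x| := neg_le_abs x
    · push_neg at h
      exact h.le.trans (le_abs_self x)
  have hInt : Integrable F := hDiff.continuous.integrable_of_hasCompactSupport hcs
  have hII : ∀ a b : ℝ, IntervalIntegrable F volume a b := fun a b => hInt.intervalIntegrable
  -- the sum is finite
  have hmj : mj φ c j ξ lam = ∑ k ∈ Finset.range (2*N+1), G (-(N:ℤ) + k) := by
    have h0 : mj φ c j ξ lam = ∑' n : ℤ, G n := by
      rw [hGdef, mj]
    rw [h0, tsum_eq_sum
      (s := (Finset.range (2*N+1)).image (fun k : ℕ => -(N:ℤ) + (k:ℤ))) ?_,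
      Finset.sum_image (by intro x _ y _ h; have h' : -(N:ℤ) + (x:ℤ) = -(N:ℤ) + (y:ℤ) := h; omega)]
    intro b hb
    have hrange : b < -(N:ℤ) ∨ (N:ℤ) < b := by
      by_contra h
      push_neg at h
      exact hb (Finset.mem_image.2 ⟨(b + N).toNat, Finset.mem_range.2 (by omega), by omega⟩)
    have habsZ : (N:ℤ) < |b| := by
      rcases hrange with h | h
      · rw [abs_of_neg (by omega : b < 0)]; omega
      · rw [abs_of_pos (by omega : 0 < b)]; omega
    have habs : (N:ℝ) < |(b:ℝ)| := by
      rw [← Int.cast_abs]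
      exact_mod_cast habsZ
    have hb0 : b ≠ 0 := by omega
    rw [hGdef]
    simp only [if_neg hb0]
    rw [psi_large hφlb hφub (lt_trans hhalf habs)]
    simp
  -- the integral splits
  set a : ℕ → ℝ := fun k => -(N:ℝ) + k with hadef
  have ha1 : ∀ k : ℕ, a (k+1) = a k + 1 := by
    intro k
    rw [hadef]
    push_cast
    ring
  have ha0 : a 0 = -(N:ℝ) := by rw [hadef]; simp
  have haN : a (2*N) = (N:ℝ) := by
    rw [hadef]
    push_cast
    ring
  have hIoc : ∫ t, F t = ∫ t in Set.Ioc (-(N:ℝ)) (N:ℝ), F t := by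
    refine (setIntegral_eq_integral_of_forall_compl_eq_zero ?_).symm
    intro x hx
    apply hFlarge
    refine lt_of_lt_of_le hhalf ?_
    rw [Set.mem_Ioc] at hx
    rcases not_and_or.1 hx with h | h
    · push_neg at h
      calc (N:ℝ) ≤ -x := by linarith
        _ ≤ |x| := neg_le_abs x
    · push_neg at h
      exact h.le.trans (le_abs_self x)
  have hNpos : (0:ℝ) < (N:ℝ) := by exact_mod_cast hN1
  have hintsplit : ∫ t, F t = ∑ k ∈ Finset.range (2*N), ∫ t in a k..a (k+1), F t := by
    rw [hIoc, ← intervalIntegral.integral_of_le (by linarith : -(N:ℝ) ≤ (N:ℝ))]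
    rw [← ha0, ← haN]
    exact (intervalIntegral.sum_integral_adjacent_intervals (fun k _ => hII _ _)).symm
  -- value of G at the right endpoint
  have hGN : G (-(N:ℤ) + ((2*N : ℕ):ℤ)) = 0 := by
    have hval : -(N:ℤ) + ((2*N : ℕ):ℤ) = (N:ℤ) := by push_cast; ring
    rw [hval, hGdef]
    simp only [if_neg (by exact_mod_cast Nat.one_le_iff_ne_zero.1 hN1 : (N:ℤ) ≠ 0)]
    have : psi φ j ((N:ℤ):ℝ) = 0 := by
      apply psi_large hφlb hφub
      rw [Int.cast_natCast, abs_of_pos hNpos]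
      exact hhalf
    rw [this]
    simp
  -- main decomposition
  have hdecomp : mj φ c j ξ lam - ∫ t, F t
      = ∑ k ∈ Finset.range (2*N), (G (-(N:ℤ) + k) - ∫ t in a k..a (k+1), F t) := by
    rw [hmj, hintsplit, Finset.sum_range_succ, hGN, add_zero, Finset.sum_sub_distrib]
  rw [hdecomp]
  -- per-term bound
  have hterm : ∀ k ∈ Finset.range (2*N),
      ‖G (-(N:ℤ) + k) - ∫ t in a k..a (k+1), F t‖
        ≤ 2 * Real.pi * |lam| * (8 * (2:ℝ) ^ (-(j:ℝ))) + M := by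
    intro k hk
    set n : ℤ := -(N:ℤ) + k with hndef
    have hax : ((n:ℤ):ℝ) = a k := by
      rw [hndef, hadef]
      push_cast
      ring
    have hB : (0:ℝ) < (2:ℝ) ^ (-(j:ℝ)) := Real.rpow_pos_of_pos two_pos _
    have h1 : ‖G n - F ((n:ℤ):ℝ)‖ ≤ 2 * Real.pi * |lam| * (8 * (2:ℝ) ^ (-(j:ℝ))) := by
      by_cases hn0 : n = 0
      · have hψ0 : psi φ j ((n:ℤ):ℝ) = 0 := by
          rw [hn0]
          apply psi_small hφlb hφub
          simp only [Int.cast_zero, abs_zero]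
          positivity
        rw [hGdef]
        simp only [if_pos hn0]
        rw [hFdef]
        simp only
        rw [hψ0]
        simp
        positivity
      · rw [hGdef, hFdef]
        simp only [if_neg hn0]
        rw [← sub_mul, norm_mul, Complex.norm_real, Real.norm_eq_abs]
        have hfl : |lam * (⌊|((n:ℤ):ℝ)| ^ c⌋ : ℝ) - ξ * ((n:ℤ):ℝ)
            - (lam * |((n:ℤ):ℝ)| ^ c - ξ * ((n:ℤ):ℝ))| ≤ |lam| := by
          rw [show lam * (⌊|((n:ℤ):ℝ)| ^ c⌋ : ℝ) - ξ * ((n:ℤ):ℝ)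
            - (lam * |((n:ℤ):ℝ)| ^ c - ξ * ((n:ℤ):ℝ))
            = lam * ((⌊|((n:ℤ):ℝ)| ^ c⌋ : ℝ) - |((n:ℤ):ℝ)| ^ c) by ring]
          rw [abs_mul]
          have hfloor : |(⌊|((n:ℤ):ℝ)| ^ c⌋ : ℝ) - |((n:ℤ):ℝ)| ^ c| ≤ 1 := by
            rw [abs_le]
            constructor
            · have := Int.lt_floor_add_one (|((n:ℤ):ℝ)| ^ c)
              linarith
            · have := Int.floor_le (|((n:ℤ):ℝ)| ^ c)
              linarith
          nlinarith [abs_nonneg lam]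
        calc ‖e (lam * (⌊|((n:ℤ):ℝ)| ^ c⌋ : ℝ) - ξ * ((n:ℤ):ℝ))
              - e (lam * |((n:ℤ):ℝ)| ^ c - ξ * ((n:ℤ):ℝ))‖ * |psi φ j ((n:ℤ):ℝ)|
            ≤ (2 * Real.pi * |lam|) * (8 * (2:ℝ) ^ (-(j:ℝ))) := by
              apply mul_le_mul ?_ (psi_abs_le hφlb hφub _) (abs_nonneg _) (by positivity)
              refine (e_lip _ _).trans ?_
              have := mul_le_mul_of_nonneg_left hfl (by positivity : (0:ℝ) ≤ 2 * Real.pi)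
              linarith
          _ = 2 * Real.pi * |lam| * (8 * (2:ℝ) ^ (-(j:ℝ))) := by ring
    have h2 : ‖F ((n:ℤ):ℝ) - ∫ t in a k..a (k+1), F t‖ ≤ M := by
      rw [hax]
      have heq : ∫ t in a k..a (k+1), (F (a k) - F t)
          = F (a k) - ∫ t in a k..a (k+1), F t := by
        rw [intervalIntegral.integral_sub intervalIntegrable_const (hII _ _),
          intervalIntegral.integral_const, ha1]
        simp
      rw [← heq]
      have hle : a k ≤ a (k+1) := by rw [ha1]; linarith
      refine (intervalIntegral.norm_integral_le_of_norm_le_const (C := M) ?_).trans ?_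
      · intro t ht
        rw [Set.uIoc_of_le hle, ha1] at ht
        refine (hLip (a k) t).trans ?_
        have habs1 : |a k - t| ≤ 1 := by
          rw [abs_le]
          constructor <;> [linarith [ht.2]; linarith [ht.1]]
        nlinarith
      · rw [ha1]
        simp
    calc ‖G n - ∫ t in a k..a (k+1), F t‖
        ≤ ‖G n - F ((n:ℤ):ℝ)‖ + ‖F ((n:ℤ):ℝ) - ∫ t in a k..a (k+1), F t‖ := by
          have := norm_add_le (G n - F ((n:ℤ):ℝ)) (F ((n:ℤ):ℝ) - ∫ t in a k..a (k+1), F t)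
          simpa using this
      _ ≤ 2 * Real.pi * |lam| * (8 * (2:ℝ) ^ (-(j:ℝ))) + M := add_le_add h1 h2
  -- sum up
  refine (norm_sum_le _ _).trans ?_
  refine (Finset.sum_le_sum hterm).trans ?_
  rw [Finset.sum_const, Finset.card_range, nsmul_eq_mul]
  -- final arithmetic
  have hprod1 : (2:ℝ) ^ ((j:ℝ)) * (2:ℝ) ^ (-(j:ℝ)) = 1 := by
    rw [← Real.rpow_add two_pos]
    simp
  have hprod2 : (2:ℝ) ^ ((j:ℝ)) * (2:ℝ) ^ ((2*ε-2)*(j:ℝ)) = (2:ℝ) ^ ((2*ε-1)*(j:ℝ)) := by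
    rw [← Real.rpow_add two_pos]
    ring_nf
  have hlam' : |lam| ≤ (2:ℝ) ^ ((2*ε-1)*(j:ℝ)) := by
    refine hlam.trans (Real.rpow_le_rpow_of_exponent_le one_le_two ?_)
    have hj0 : (0:ℝ) ≤ (j:ℝ) := Nat.cast_nonneg j
    nlinarith
  have hcast : ((2*N : ℕ):ℝ) = 2 * (2:ℝ) ^ ((j:ℝ)) := by
    push_cast
    rw [hNr]
  rw [hcast]
  have hrpos : (0:ℝ) < (2:ℝ) ^ ((2*ε-1)*(j:ℝ)) := Real.rpow_pos_of_pos two_pos _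
  have hexp : 2 * (2:ℝ) ^ ((j:ℝ)) * (2 * Real.pi * |lam| * (8 * (2:ℝ) ^ (-(j:ℝ))) + M)
      = 32 * Real.pi * |lam| * ((2:ℝ) ^ ((j:ℝ)) * (2:ℝ) ^ (-(j:ℝ)))
        + 2 * (16 * Real.pi * (c + 1) + 24 * K + 64)
          * ((2:ℝ) ^ ((j:ℝ)) * (2:ℝ) ^ ((2*ε-2)*(j:ℝ))) := by
    rw [hMdef]
    ring
  rw [hexp, hprod1, hprod2, mul_one]
  have h32 : 32 * Real.pi * |lam| ≤ 32 * Real.pi * (2:ℝ) ^ ((2*ε-1)*(j:ℝ)) := by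
    apply mul_le_mul_of_nonneg_left hlam' (by positivity)
  nlinarith
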